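/- arXiv:1701.00881 — 6 statements merged into one kernel-verified Lean document; each statement's English description precedes it below -/
import Mathlib

section
/- Suppose the prefix-closed language K ⊆ L is controllable (K Σ_u ∩ L ⊆ K). Then K is P-observable under the attack set 𝒜 if and only if for every w, w' ∈ K, σ ∈ Σ_c, and A, A' ∈ 𝒜: if AP(w) ∩ A'P(w') ≠ ∅, wσ ∈ K, and w'σ ∈ L, then w'σ ∈ K. -/
variable {S D : Type*}

/-- A language is prefix closed. -/
def PrefixClosed (L : Set (List S)) : Prop := ∀ u v : List S, u ++ v ∈ L → u ∈ L

/-- `P : Σ* → Δ*` is an observation map. -/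
def IsObsMap (P : List S → List D) : Prop :=
  P [] = [] ∧ (∀ w s : List S, P (w ++ s) = P w ++ P s) ∧ ∀ σ : S, (P [σ]).length ≤ 1

/-- Controllability: `K Σ_u ∩ L ⊆ K`. -/
def Controllable (L K : Set (List S)) (Su : Set S) : Prop :=
  ∀ w ∈ K, ∀ σ ∈ Su, w ++ [σ] ∈ L → w ++ [σ] ∈ K

/-- `K` is `P`-observable under the attack set `𝒜`. -/
def ObsUnder (L K : Set (List S)) (P : List S → List D)
    (𝒜 : Set (List D → Set (List D))) : Prop :=
  ∀ w ∈ K, ∀ w' ∈ K,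
    (∃ A ∈ 𝒜, ∃ A' ∈ 𝒜, (A (P w) ∩ A' (P w')).Nonempty) →
    ∀ σ : S, ¬((w ++ [σ] ∈ K ∧ w' ++ [σ] ∈ L \ K) ∨
               (w ++ [σ] ∈ L \ K ∧ w' ++ [σ] ∈ K))

/-- Membership in the maximal controlled language `L_{f,A}^{max}`. -/
inductive LmaxMem (L : Set (List S)) (AP : List S → Set (List D)) (f : List D → Set S) :
    List S → Prop
  | nil : LmaxMem L AP f []
  | snoc (w : List S) (σ : S) : LmaxMem L AP f w → w ++ [σ] ∈ L →
      (∃ y ∈ AP w, σ ∈ f y) → LmaxMem L AP f (w ++ [σ])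

/-- Membership in the minimal controlled language `L_{f,A}^{min}`. -/
inductive LminMem (L : Set (List S)) (AP : List S → Set (List D)) (f : List D → Set S) :
    List S → Prop
  | nil : LminMem L AP f []
  | snoc (w : List S) (σ : S) : LminMem L AP f w → w ++ [σ] ∈ L →
      (∀ y ∈ AP w, σ ∈ f y) → LminMem L AP f (w ++ [σ])

/-- for a controllable prefix-closed , observability under  is
equivalent to the stated condition on controllable events. -/
theorem stmt3 (Sc Su : Set S) (hpart : Sc ∪ Su = Set.univ) (hdisj : Disjoint Sc Su)
    (P : List S → List D) (hP : IsObsMap P)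
    (𝒜 : Set (List D → Set (List D)))
    (L K : Set (List S)) (hKL : K ⊆ L) (hK : PrefixClosed K) (hL : PrefixClosed L)
    (hcont : Controllable L K Su) :
    ObsUnder L K P 𝒜 ↔
      ∀ w ∈ K, ∀ w' ∈ K, ∀ σ ∈ Sc, ∀ A ∈ 𝒜, ∀ A' ∈ 𝒜,
        (A (P w) ∩ A' (P w')).Nonempty → w ++ [σ] ∈ K → w' ++ [σ] ∈ L →
          w' ++ [σ] ∈ K := by
  constructor
  · intro hobs w hw w' hw' σ hσ A hA A' hA' hne hwK hwL
    by_contra hnK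
    exact hobs w hw w' hw' ⟨A, hA, A', hA', hne⟩ σ (Or.inl ⟨hwK, hwL, hnK⟩)
  · intro h w hw w' hw' ⟨A, hA, A', hA', hne⟩ σ hbad
    have : σ ∈ Sc ∪ Su := hpart ▸ Set.mem_univ σ
    rcases this with hσ | hσ
    · rcases hbad with ⟨h1, h2, h3⟩ | ⟨⟨h1, h3⟩, h2⟩
      · exact h3 (h w hw w' hw' σ hσ A hA A' hA' hne h1 h2)
      · exact h3 (h w' hw' w hw σ hσ A' hA' A hA
          (by rwa [Set.inter_comm] at hne) h2 h1)
    · rcases hbad with ⟨h1, h2, h3⟩ | ⟨⟨h1, h3⟩, h2⟩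
      · exact h3 (hcont w' hw' σ hσ h2)
      · exact h3 (hcont w hw σ hσ h1)
end

section
/- If there exists a valid P-supervisor f such that L_{f,A}^{min} = L_{f,A}^{max} = K for all A ∈ 𝒜, then K is P-observable under 𝒜: for all w, w' ∈ K with AP(w) ∩ A'P(w') ≠ ∅ for some A, A' ∈ 𝒜, and for all σ ∈ Σ, either wσ ∉ L, or w'σ ∉ L, or [wσ ∈ K and w'σ ∈ K], or [wσ ∈ L\K and w'σ ∈ L\K]. -/
variable {S D : Type*}

lemma lmin_inv {L : Set (List S)} {AP : List S → Set (List D)} {f : List D → Set S}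
    {w : List S} {σ : S} (h : LminMem L AP f (w ++ [σ])) : ∀ y ∈ AP w, σ ∈ f y := by
  generalize hw : w ++ [σ] = u at h
  cases h with
  | nil => exact absurd hw (by simp)
  | snoc w' σ' _ _ hall =>
      obtain ⟨h1, h2⟩ := List.append_inj' hw rfl
      simpa [← h1, List.singleton_injective h2] using hall

/-- if a valid supervisor `f` satisfies
`L_{f,A}^{min} = L_{f,A}^{max} = K` for all `A ∈ 𝒜`, then `K` is `P`-observable
under `𝒜` (stated in the equivalent form of eq:act-K-attacks). -/
theorem stmt5 (Sc Su : Set S) (hpart : Sc ∪ Su = Set.univ) (hdisj : Disjoint Sc Su)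
    (P : List S → List D) (hP : IsObsMap P)
    (𝒜 : Set (List D → Set (List D)))
    (L K : Set (List S)) (hKL : K ⊆ L) (hKne : K.Nonempty)
    (hK : PrefixClosed K) (hL : PrefixClosed L)
    (f : List D → Set S)
    (hvalid : ∀ y : List D, (∃ A ∈ 𝒜, ∃ w ∈ L, y ∈ A (P w)) → Su ⊆ f y)
    (hmin : ∀ A ∈ 𝒜, {w | LminMem L (fun w => A (P w)) f w} = K)
    (hmax : ∀ A ∈ 𝒜, {w | LmaxMem L (fun w => A (P w)) f w} = K) :
    ∀ w ∈ K, ∀ w' ∈ K,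
      (∃ A ∈ 𝒜, ∃ A' ∈ 𝒜, (A (P w) ∩ A' (P w')).Nonempty) →
      ∀ σ : S, w ++ [σ] ∉ L ∨ w' ++ [σ] ∉ L ∨
        (w ++ [σ] ∈ K ∧ w' ++ [σ] ∈ K) ∨
        (w ++ [σ] ∈ L \ K ∧ w' ++ [σ] ∈ L \ K) := by
  intro w hw w' hw' ⟨A, hA, A', hA', y, hyA, hyA'⟩ σ
  by_cases h1 : w ++ [σ] ∈ L
  · by_cases h2 : w' ++ [σ] ∈ L
    · by_cases hf : σ ∈ f y
      · refine Or.inr (Or.inr (Or.inl ⟨?_, ?_⟩))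
        · rw [← hmax A hA] at hw ⊢
          exact LmaxMem.snoc w σ hw h1 ⟨y, hyA, hf⟩
        · rw [← hmax A' hA'] at hw' ⊢
          exact LmaxMem.snoc w' σ hw' h2 ⟨y, hyA', hf⟩
      · refine Or.inr (Or.inr (Or.inr ⟨⟨h1, ?_⟩, ⟨h2, ?_⟩⟩))
        · intro hk
          rw [← hmin A hA] at hk
          exact hf (lmin_inv hk y hyA)
        · intro hk
          rw [← hmin A' hA'] at hk
          exact hf (lmin_inv hk y hyA')
    · exact Or.inr (Or.inl h2)
  · exact Or.inl h1
end

section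
/- For any two symbol sets α₁, α₂ ⊆ Δ and α := α₁ ∪ α₂, if two strings v, v' ∈ Δ* satisfy R_{¬α}(v) = R_{¬α}(v'), then there exists a string y ∈ Δ* with R_{¬α₁}(v) = R_{¬α₁}(y) and R_{¬α₂}(v') = R_{¬α₂}(y); i.e., A_{α₁}(v) ∩ A_{α₂}(v') ≠ ∅. -/
variable {D : Type*} [DecidableEq D]

/-- The `α`-removal map `R_{¬α}` erases all symbols in `α`. -/
def Rrem (α : Finset D) (v : List D) : List D := v.filter (fun t => decide (t ∉ α))

/-- The insertion-removal attack `A_α(u) = {v : R_{¬α}(u) = R_{¬α}(v)}`. -/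
def Ains (α : Finset D) (u : List D) : Set (List D) := {v | Rrem α u = Rrem α v}

lemma Rrem_cons_mem (α : Finset D) (a : D) (v : List D) (h : a ∈ α) :
    Rrem α (a :: v) = Rrem α v := by simp [Rrem, h]

lemma Rrem_cons_not (α : Finset D) (a : D) (v : List D) (h : a ∉ α) :
    Rrem α (a :: v) = a :: Rrem α v := by simp [Rrem, h]

/-- if `R_{¬α}(v) = R_{¬α}(v')` with `α = α₁ ∪ α₂`, then
`A_{α₁}(v) ∩ A_{α₂}(v') ≠ ∅`. -/
theorem stmt7 (α₁ α₂ : Finset D) (v v' : List D)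
    (h : Rrem (α₁ ∪ α₂) v = Rrem (α₁ ∪ α₂) v') :
    ∃ y : List D, Rrem α₁ v = Rrem α₁ y ∧ Rrem α₂ v' = Rrem α₂ y := by
  revert h
  induction v generalizing v' with
  | nil =>
    induction v' with
    | nil => exact fun _ => ⟨[], rfl, rfl⟩
    | cons b vt ih =>
      intro h
      by_cases hb : b ∈ α₁ ∪ α₂
      · rw [Rrem_cons_mem _ _ _ hb] at h
        obtain ⟨y, h1, h2⟩ := ih h
        by_cases hb2 : b ∈ α₂
        · exact ⟨y, h1, by rw [Rrem_cons_mem _ _ _ hb2]; exact h2⟩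
        · have hb1 : b ∈ α₁ := by
            rcases Finset.mem_union.mp hb with h' | h' <;> tauto
          refine ⟨b :: y, ?_, ?_⟩
          · rw [Rrem_cons_mem _ _ _ hb1]; exact h1
          · rw [Rrem_cons_not _ _ _ hb2, Rrem_cons_not _ _ _ hb2, h2]
      · rw [Rrem_cons_not _ _ _ hb] at h
        simp [Rrem] at h
  | cons a vt iv =>
    by_cases ha1 : a ∈ α₁
    · intro h
      rw [Rrem_cons_mem _ _ _ (Finset.mem_union_left _ ha1)] at h
      obtain ⟨y, h1, h2⟩ := iv v' h
      exact ⟨y, by rw [Rrem_cons_mem _ _ _ ha1]; exact h1, h2⟩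
    · by_cases ha2 : a ∈ α₂
      · intro h
        rw [Rrem_cons_mem _ _ _ (Finset.mem_union_right _ ha2)] at h
        obtain ⟨y, h1, h2⟩ := iv v' h
        refine ⟨a :: y, ?_, ?_⟩
        · rw [Rrem_cons_not _ _ _ ha1, Rrem_cons_not _ _ _ ha1, h1]
        · rw [Rrem_cons_mem _ _ _ ha2]; exact h2
      · have haα : a ∉ α₁ ∪ α₂ := by simp [ha1, ha2]
        induction v' with
        | nil =>
          intro h
          rw [Rrem_cons_not _ _ _ haα] at h
          simp [Rrem] at h
        | cons b v't ih' =>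
          intro h
          by_cases hbα : b ∈ α₁ ∪ α₂
          · rw [Rrem_cons_mem _ _ _ hbα] at h
            obtain ⟨y, h1, h2⟩ := ih' h
            by_cases hb2 : b ∈ α₂
            · exact ⟨y, h1, by rw [Rrem_cons_mem _ _ _ hb2]; exact h2⟩
            · have hb1 : b ∈ α₁ := by
                rcases Finset.mem_union.mp hbα with h' | h' <;> tauto
              refine ⟨b :: y, ?_, ?_⟩
              · rw [Rrem_cons_mem _ _ _ hb1]; exact h1
              · rw [Rrem_cons_not _ _ _ hb2, Rrem_cons_not _ _ _ hb2, h2]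
          · rw [Rrem_cons_not _ _ _ haα, Rrem_cons_not _ _ _ hbα] at h
            injection h with hab h
            subst hab
            obtain ⟨y, h1, h2⟩ := iv v't h
            refine ⟨a :: y, ?_, ?_⟩
            · rw [Rrem_cons_not _ _ _ ha1, Rrem_cons_not _ _ _ ha1, h1]
            · rw [Rrem_cons_not _ _ _ ha2, Rrem_cons_not _ _ _ ha2, h2]
end

section
/- For a replacement-removal attack A, the inverse attacked observation map is multiplicative: AP⁻¹(yv) = AP⁻¹(y)·AP⁻¹(v) for all y, v ∈ Δ*, where AP⁻¹(y) := {w ∈ Σ* : y ∈ AP(w)} and the product of languages is elementwise concatenation. -/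
variable {S D : Type*}

/-- `A` is the replacement-removal attack generated by `φ : Δ → 2^{Δ ∪ {ε}}`:
`A(ε) = {ε}` and `A(yt) = {w_y w_t : w_y ∈ A(y), w_t ∈ φ(t)}`. -/
def IsRRAttack (φ : D → Set (List D)) (A : List D → Set (List D)) : Prop :=
  (∀ t : D, ∀ v ∈ φ t, v.length ≤ 1) ∧ (A [] = {[]}) ∧
  ∀ (y : List D) (t : D),
    A (y ++ [t]) = {v | ∃ wy ∈ A y, ∃ wt ∈ φ t, v = wy ++ wt}

/-- The inverse attacked observation map `AP⁻¹`. -/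
def APinv (P : List S → List D) (A : List D → Set (List D)) (y : List D) : Set (List S) :=
  {w | y ∈ A (P w)}

lemma A_append (φ : D → Set (List D)) (A : List D → Set (List D)) (hA : IsRRAttack φ A) :
    ∀ y v : List D, A (y ++ v) = {w | ∃ a ∈ A y, ∃ b ∈ A v, w = a ++ b} := by
  intro y v
  induction v using List.reverseRecOn with
  | nil => ext x; simp [hA.2.1]
  | append_singleton v' t ih =>
    rw [← List.append_assoc, hA.2.2, ih, hA.2.2]
    ext x
    simp only [Set.mem_setOf_eq]
    constructor
    · rintro ⟨wy, ⟨a, ha, b, hb, rfl⟩, wt, hwt, rfl⟩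
      exact ⟨a, ha, b ++ wt, ⟨b, hb, wt, hwt, rfl⟩, List.append_assoc ..⟩
    · rintro ⟨a, ha, _, ⟨b, hb, wt, hwt, rfl⟩, rfl⟩
      exact ⟨a ++ b, ⟨a, ha, b, hb, rfl⟩, wt, hwt, (List.append_assoc ..).symm⟩

lemma A_split (φ : D → Set (List D)) (A : List D → Set (List D)) (hA : IsRRAttack φ A) :
    ∀ (y x : List D), x ∈ A y → ∀ k, k ≤ x.length →
      ∃ y1 y2, y = y1 ++ y2 ∧ x.take k ∈ A y1 ∧ x.drop k ∈ A y2 := by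
  intro y
  induction y using List.reverseRecOn with
  | nil =>
    intro x hx k hk
    rw [hA.2.1] at hx
    simp only [Set.mem_singleton_iff] at hx
    subst hx
    simp only [List.length_nil, Nat.le_zero] at hk
    subst hk
    exact ⟨[], [], rfl, by simp [hA.2.1], by simp [hA.2.1]⟩
  | append_singleton y' t ih =>
    intro x hx k hk
    rw [hA.2.2] at hx
    obtain ⟨wy, hwy, wt, hwt, rfl⟩ := hx
    by_cases h : k ≤ wy.length
    · obtain ⟨y1, y2, rfl, h1, h2⟩ := ih wy hwy k h
      refine ⟨y1, y2 ++ [t], by simp, ?_, ?_⟩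
      · rwa [List.take_append_of_le_length h]
      · rw [List.drop_append_of_le_length h, hA.2.2]
        exact ⟨wy.drop k, h2, wt, hwt, rfl⟩
    · have hk' : k = (wy ++ wt).length := by
        have := hA.1 t wt hwt
        simp only [List.length_append] at hk ⊢
        omega
      refine ⟨y' ++ [t], [], by simp, ?_, ?_⟩
      · rw [hk', List.take_length, hA.2.2]
        exact ⟨wy, hwy, wt, hwt, rfl⟩
      · rw [hk', List.drop_length, hA.2.1]
        rfl

lemma P_split (P : List S → List D) (hP : IsObsMap P) :
    ∀ (w : List S) (k : ℕ), k ≤ (P w).length → ∃ a b, w = a ++ b ∧ (P a).length = k := by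
  intro w
  induction w with
  | nil =>
    intro k hk
    rw [hP.1] at hk
    simp only [List.length_nil, Nat.le_zero] at hk
    exact ⟨[], [], rfl, by simp [hP.1, hk]⟩
  | cons σ w' ih =>
    intro k hk
    have hcons : P (σ :: w') = P [σ] ++ P w' := by
      have := hP.2.1 [σ] w'; simpa using this
    rcases Nat.eq_zero_or_pos k with rfl | hk0
    · exact ⟨[], σ :: w', rfl, by simp [hP.1]⟩
    · have hlen := hP.2.2 σ
      have hk' : k - (P [σ]).length ≤ (P w').length := by
        rw [hcons, List.length_append] at hk
        omega
      obtain ⟨a, b, rfl, hlena⟩ := ih _ hk'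
      refine ⟨σ :: a, b, rfl, ?_⟩
      have h2 : P (σ :: a) = P [σ] ++ P a := by
        have := hP.2.1 [σ] a; simpa using this
      rw [h2, List.length_append, hlena]
      have : (P [σ]).length ≤ k := le_trans hlen hk0
      omega

/-- `AP⁻¹(yv) = AP⁻¹(y)·AP⁻¹(v)`. -/
theorem stmt12 (P : List S → List D) (hP : IsObsMap P)
    (φ : D → Set (List D)) (A : List D → Set (List D)) (hA : IsRRAttack φ A) :
    ∀ y v : List D,
      APinv P A (y ++ v) = {w | ∃ a ∈ APinv P A y, ∃ b ∈ APinv P A v, w = a ++ b} := by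
  intro y v
  ext w
  simp only [APinv, Set.mem_setOf_eq]
  constructor
  · intro hw
    obtain ⟨p1, p2, hPw, h1, h2⟩ :=
      A_split φ A hA (P w) (y ++ v) hw y.length (by simp)
    rw [List.take_left] at h1
    rw [List.drop_left] at h2
    obtain ⟨a, b, rfl, hla⟩ := P_split P hP w p1.length (by rw [hPw]; simp)
    have hab : P a ++ P b = p1 ++ p2 := by rw [← hP.2.1, hPw]
    obtain ⟨ha, hb⟩ := List.append_inj hab hla
    exact ⟨a, ha ▸ h1, b, hb ▸ h2, rfl⟩
  · rintro ⟨a, ha, b, hb, rfl⟩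
    rw [hP.2.1, A_append φ A hA]
    exact ⟨y, ha, v, hb, rfl⟩
end

section
/- Observer state correctness: for a replacement-removal attack A and specification automaton G_K = (R, Σ, η, r₀), the observer Obs_A(G_K) constructed via unobservable reaches satisfies: for all y ∈ L(Obs_A(G_K)), a state r belongs to η_obs,A(r₀,obs,A, y) if and only if there exists w ∈ AP⁻¹(y) with r = η(r₀, w). -/
open Classical

variable {S D R : Type*}

/-- Run of a deterministic partial automaton on a string. -/
def run {Q E : Type*} (δ : Q → E → Option Q) : Q → List E → Option Q
  | q, [] => some q
  | q, e :: l =>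
    match δ q e with
    | none => none
    | some q' => run δ q' l

/-- Unobservable reach `UR_A(B)` of a set of states `B` under attack `A`. -/
def UR (P : List S → List D) (A : List D → Set (List D)) (η : R → S → Option R)
    (B : Set R) : Set R :=
  {z | ∃ r ∈ B, ∃ u : List S, [] ∈ A (P u) ∧ run η r u = some z}

open Classical in
/-- Observer transition `η_{obs,A}`. -/
noncomputable def etaObs (P : List S → List D) (A : List D → Set (List D))
    (η : R → S → Option R) (B : Set R) (t : D) : Option (Set R) :=
  if ∃ r ∈ B, ∃ e : S, [t] ∈ A (P [e]) ∧ (η r e).isSome then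
    some (UR P A η {z | ∃ r ∈ B, ∃ e : S, [t] ∈ A (P [e]) ∧ η r e = some z})
  else none

lemma run_append {Q E : Type*} (δ : Q → E → Option Q) (q : Q) (l1 l2 : List E) :
    run δ q (l1 ++ l2) = (run δ q l1).bind (fun q' => run δ q' l2) := by
  induction l1 generalizing q with
  | nil => simp [run]
  | cons e l ih =>
    simp only [List.cons_append, run]
    cases δ q e with
    | none => simp
    | some q' => simp [ih]

lemma lenA {φ : D → Set (List D)} {A : List D → Set (List D)} (hA : IsRRAttack φ A) :
    ∀ x z, z ∈ A x → z.length ≤ x.length := by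
  intro x
  induction x using List.reverseRecOn with
  | nil => intro z hz; rw [hA.2.1] at hz; simp_all
  | append_singleton x t ih =>
    intro z hz
    rw [hA.2.2] at hz
    obtain ⟨wy, hwy, wt, hwt, rfl⟩ := hz
    have h1 := hA.1 t wt hwt
    have h2 := ih wy hwy
    simp only [List.length_append, List.length_singleton]
    omega

lemma concatA {φ : D → Set (List D)} {A : List D → Set (List D)} (hA : IsRRAttack φ A)
    {x1 x2 z1 z2} (h1 : z1 ∈ A x1) (h2 : z2 ∈ A x2) : z1 ++ z2 ∈ A (x1 ++ x2) := by
  induction x2 using List.reverseRecOn generalizing z2 with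
  | nil => rw [hA.2.1] at h2; simp_all
  | append_singleton x t ih =>
    rw [hA.2.2] at h2
    obtain ⟨wy, hwy, wt, hwt, rfl⟩ := h2
    rw [← List.append_assoc, hA.2.2]
    exact ⟨z1 ++ wy, ih hwy, wt, hwt, by simp⟩

lemma splitA {φ : D → Set (List D)} {A : List D → Set (List D)} (hA : IsRRAttack φ A)
    {x1 x2 z} (h : z ∈ A (x1 ++ x2)) :
    ∃ z1 z2, z = z1 ++ z2 ∧ z1 ∈ A x1 ∧ z2 ∈ A x2 := by
  induction x2 using List.reverseRecOn generalizing z with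
  | nil => exact ⟨z, [], by simp, by simpa using h, by rw [hA.2.1]; rfl⟩
  | append_singleton x t ih =>
    rw [← List.append_assoc, hA.2.2] at h
    obtain ⟨wy, hwy, wt, hwt, rfl⟩ := h
    obtain ⟨z1, z2, rfl, hz1, hz2⟩ := ih hwy
    refine ⟨z1, z2 ++ wt, by simp, hz1, ?_⟩
    rw [hA.2.2]
    exact ⟨z2, hz2, wt, hwt, rfl⟩

lemma word_split {P : List S → List D} (hP : IsObsMap P)
    {φ : D → Set (List D)} {A : List D → Set (List D)} (hA : IsRRAttack φ A)
    (y : List D) (t : D) (w : List S) :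
    y ++ [t] ∈ A (P w) ↔
      ∃ w1 e w2, w = w1 ++ e :: w2 ∧ y ∈ A (P w1) ∧ [t] ∈ A (P [e]) ∧ [] ∈ A (P w2) := by
  constructor
  · induction w using List.reverseRecOn generalizing y with
    | nil =>
      intro h
      rw [hP.1, hA.2.1] at h
      simp at h
    | append_singleton w' σ ih =>
      intro h
      rw [hP.2.1] at h
      obtain ⟨z1, z2, heq, hz1, hz2⟩ := splitA hA h
      have hlen : z2.length ≤ 1 := le_trans (lenA hA _ _ hz2) (hP.2.2 σ)
      match z2, hlen with
      | [], _ =>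
        rw [List.append_nil] at heq
        subst heq
        obtain ⟨w1, e, w2, rfl, h1, h2, h3⟩ := ih y hz1
        refine ⟨w1, e, w2 ++ [σ], by simp, h1, h2, ?_⟩
        have h4 := concatA hA h3 hz2
        rw [hP.2.1]
        simpa using h4
      | [t'], _ =>
        obtain ⟨rfl, ht⟩ := List.append_inj' heq rfl
        obtain rfl : t = t' := by simpa using ht
        exact ⟨w', σ, [], by simp, hz1, hz2, by rw [hP.1, hA.2.1]; rfl⟩
  · rintro ⟨w1, e, w2, rfl, h1, h2, h3⟩
    have : (y ++ [t]) ++ [] ∈ A ((P w1 ++ P [e]) ++ P w2) :=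
      concatA hA (concatA hA h1 h2) h3
    rw [List.append_nil] at this
    have heq : P (w1 ++ e :: w2) = (P w1 ++ P [e]) ++ P w2 := by
      have : w1 ++ e :: w2 = (w1 ++ [e]) ++ w2 := by simp
      rw [this, hP.2.1, hP.2.1]
    rwa [heq]

/-- observer state correctness. -/
theorem stmt13 (P : List S → List D) (hP : IsObsMap P)
    (φ : D → Set (List D)) (A : List D → Set (List D)) (hA : IsRRAttack φ A)
    (η : R → S → Option R) (r₀ : R) :
    ∀ (y : List D) (B : Set R),
      run (etaObs P A η) (UR P A η {r₀}) y = some B →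
      ∀ r : R, r ∈ B ↔ ∃ w : List S, y ∈ A (P w) ∧ run η r₀ w = some r := by
  intro y
  induction y using List.reverseRecOn with
  | nil =>
    intro B hB r
    simp only [run] at hB
    obtain rfl : UR P A η {r₀} = B := by injection hB
    constructor
    · rintro ⟨r', hr', u, hu, hrun⟩
      obtain rfl : r' = r₀ := hr'
      exact ⟨u, hu, hrun⟩
    · rintro ⟨w, hw, hrun⟩
      exact ⟨r₀, rfl, w, hw, hrun⟩
  | append_singleton y t ih =>
    intro B hB r
    rw [run_append] at hB
    cases hB' : run (etaObs P A η) (UR P A η {r₀}) y with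
    | none => rw [hB'] at hB; simp at hB
    | some B' =>
      rw [hB'] at hB
      simp only [Option.bind_some] at hB
      cases hEt : etaObs P A η B' t with
      | none => simp only [run, hEt] at hB; exact nomatch hB
      | some B'' =>
        simp only [run, hEt] at hB
        obtain rfl : B'' = B := by injection hB
        have ihB' := ih B' hB'
        unfold etaObs at hEt
        split at hEt
        case isFalse => exact absurd hEt (by simp)
        case isTrue hcond =>
          obtain rfl : UR P A η {z | ∃ r ∈ B', ∃ e : S, [t] ∈ A (P [e]) ∧ η r e = some z} = B'' := by
            injection hEt
          constructor
          · rintro ⟨z, ⟨r', hr'B', e, hte, hze⟩, u, hu, hzu⟩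
            obtain ⟨w1, hw1, hr1⟩ := (ihB' r').1 hr'B'
            refine ⟨w1 ++ e :: u, (word_split hP hA y t _).2 ⟨w1, e, u, rfl, hw1, hte, hu⟩, ?_⟩
            rw [run_append, hr1, Option.bind_some]
            simp only [run, hze]
            exact hzu
          · rintro ⟨w, hw, hrun⟩
            obtain ⟨w1, e, w2, rfl, h1, h2, h3⟩ := (word_split hP hA y t _).1 hw
            rw [run_append] at hrun
            cases hr1 : run η r₀ w1 with
            | none => rw [hr1] at hrun; simp at hrun
            | some r' =>
              rw [hr1, Option.bind_some] at hrun
              cases hre : η r' e with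
              | none => simp only [run, hre] at hrun; exact nomatch hrun
              | some z =>
                simp only [run, hre] at hrun
                exact ⟨z, ⟨r', (ihB' r').2 ⟨w1, h1, hr1⟩, e, h2, hre⟩, w2, h3, hrun⟩
end

section
/- For replacement-removal attacks A, A', a pair (w, w') ∈ Σ*×Σ* can be written as a product of pairs from Σ_{T,A,A'} := {(σ,σ') ∈ (Σ∪{ε})×(Σ∪{ε}) \ {(ε,ε)} : AP(σ) ∩ A'P(σ') ≠ ∅} (or is (ε,ε)) if and only if AP(w) ∩ A'P(w') ≠ ∅. -/
variable {S D R X : Type*}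

/-- One step of an automaton by an element of `Σ ∪ {ε}` (an `Option S`):
`ε` leaves the state unchanged. -/
def step {Q : Type*} (δ : Q → S → Option Q) (q : Q) : Option S → Option Q
  | none => some q
  | some σ => δ q σ

/-- The event set `Σ_{T,A,A′}` of the test automaton: pairs in
`(Σ ∪ {ε}) × (Σ ∪ {ε}) \ {(ε,ε)}` whose attacked observations intersect. -/
def SigmaT (P : List S → List D) (A A' : List D → Set (List D)) :
    Set (Option S × Option S) :=
  {p | p ≠ (none, none) ∧ (A (P p.1.toList) ∩ A' (P p.2.toList)).Nonempty}

/-- Transition map of the test automaton `T_{A,A′}` on states `R × X × R`. -/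
def deltaT (η : R → S → Option R) (ξ : X → S → Option X)
    (q : R × X × R) (p : Option S × Option S) : Option (R × X × R) :=
  match step η q.1 p.1, step ξ q.2.1 p.2, step η q.2.2 p.2 with
  | some a, some b, some c => some (a, b, c)
  | _, _, _ => none

/-- First component of a string of pair-events, concatenated. -/
def flat1 (l : List (Option S × Option S)) : List S :=
  l.foldr (fun p acc => p.1.toList ++ acc) []

/-- Second component of a string of pair-events, concatenated. -/
def flat2 (l : List (Option S × Option S)) : List S :=
  l.foldr (fun p acc => p.2.toList ++ acc) []

lemma rr_homo {φ : D → Set (List D)} {A : List D → Set (List D)} (hA : IsRRAttack φ A) :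
    ∀ (z y : List D), A (y ++ z) = {v | ∃ a ∈ A y, ∃ b ∈ A z, v = a ++ b} := by
  intro z
  induction z using List.reverseRecOn with
  | nil =>
    intro y
    ext v
    simp [hA.2.1]
  | append_singleton z t ih =>
    intro y
    rw [← List.append_assoc, hA.2.2]
    ext v
    simp only [Set.mem_setOf_eq]
    constructor
    · rintro ⟨wy, hwy, wt, hwt, rfl⟩
      rw [ih] at hwy
      obtain ⟨a, ha, b, hb, rfl⟩ := hwy
      exact ⟨a, ha, b ++ wt, by rw [hA.2.2]; exact ⟨b, hb, wt, hwt, rfl⟩, by simp⟩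
    · rintro ⟨a, ha, b, hb, rfl⟩
      rw [hA.2.2] at hb
      obtain ⟨wz, hwz, wt, hwt, rfl⟩ := hb
      exact ⟨a ++ wz, by rw [ih]; exact ⟨a, ha, wz, hwz, rfl⟩, wt, hwt, by simp⟩

lemma piece_len {P : List S → List D} (hP : IsObsMap P) {φ : D → Set (List D)}
    {A : List D → Set (List D)} (hA : IsRRAttack φ A)
    (σ : S) {v : List D} (hv : v ∈ A (P [σ])) : v.length ≤ 1 := by
  have hl := hP.2.2 σ
  rcases hx : P [σ] with _ | ⟨t, rest⟩
  · rw [hx, hA.2.1] at hv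
    simp only [Set.mem_singleton_iff] at hv
    simp [hv]
  · have hr : rest = [] := by
      rw [hx, List.length_cons] at hl; exact List.length_eq_zero_iff.mp (by omega)
    subst hr
    rw [hx, show [t] = ([] : List D) ++ [t] from rfl, hA.2.2] at hv
    obtain ⟨wy, hwy, wt, hwt, rfl⟩ := hv
    rw [hA.2.1] at hwy
    simp only [Set.mem_singleton_iff] at hwy
    subst hwy
    simpa using hA.1 t wt hwt

lemma flat1_nil : flat1 ([] : List (Option S × Option S)) = [] := rfl

lemma flat2_nil : flat2 ([] : List (Option S × Option S)) = [] := rfl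

lemma flat1_cons (p : Option S × Option S) (l : List (Option S × Option S)) :
    flat1 (p :: l) = p.1.toList ++ flat1 l := rfl

lemma flat2_cons (p : Option S × Option S) (l : List (Option S × Option S)) :
    flat2 (p :: l) = p.2.toList ++ flat2 l := rfl

lemma decomp {P : List S → List D} (hP : IsObsMap P) {φ : D → Set (List D)}
    {A : List D → Set (List D)} (hA : IsRRAttack φ A) :
    ∀ (w : List S) (v : List D), v ∈ A (P w) → ∃ ps : List (S × List D),
      ps.map Prod.fst = w ∧ (∀ p ∈ ps, p.2 ∈ A (P [p.1])) ∧
      v = (ps.map Prod.snd).flatten := by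
  intro w
  induction w with
  | nil =>
    intro v hv
    rw [hP.1, hA.2.1] at hv
    simp only [Set.mem_singleton_iff] at hv
    exact ⟨[], by simp [hv]⟩
  | cons σ w ih =>
    intro v hv
    rw [show σ :: w = [σ] ++ w from rfl, hP.2.1, rr_homo hA] at hv
    obtain ⟨a, ha, b, hb, rfl⟩ := hv
    obtain ⟨ps, h1, h2, h3⟩ := ih b hb
    refine ⟨(σ, a) :: ps, by simp [h1], ?_, by simp [h3]⟩
    intro p hp
    rcases List.mem_cons.mp hp with rfl | hp
    · exact ha
    · exact h2 p hp

lemma forward_dir {P : List S → List D} (hP : IsObsMap P) {φ φ' : D → Set (List D)}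
    {A A' : List D → Set (List D)} (hA : IsRRAttack φ A) (hA' : IsRRAttack φ' A') :
    ∀ l : List (Option S × Option S), (∀ p ∈ l, p ∈ SigmaT P A A') →
      (A (P (flat1 l)) ∩ A' (P (flat2 l))).Nonempty := by
  intro l
  induction l with
  | nil =>
    intro _
    refine ⟨[], ?_, ?_⟩ <;> simp [flat1, flat2, hP.1, hA.2.1, hA'.2.1]
  | cons p l ih =>
    intro h
    obtain ⟨-, u, hu1, hu2⟩ := h p (by simp)
    obtain ⟨v, hv1, hv2⟩ := ih (fun q hq => h q (by simp [hq]))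
    refine ⟨u ++ v, ?_, ?_⟩
    · rw [flat1_cons, hP.2.1, rr_homo hA]
      exact ⟨u, hu1, v, hv1, rfl⟩
    · rw [flat2_cons, hP.2.1, rr_homo hA']
      exact ⟨u, hu2, v, hv2, rfl⟩

lemma merge {P : List S → List D} (hP : IsObsMap P) {φ φ' : D → Set (List D)}
    {A A' : List D → Set (List D)} (hA : IsRRAttack φ A) (hA' : IsRRAttack φ' A') :
    ∀ ps ps' : List (S × List D),
      (∀ p ∈ ps, p.2 ∈ A (P [p.1])) → (∀ p ∈ ps', p.2 ∈ A' (P [p.1])) →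
      (ps.map Prod.snd).flatten = (ps'.map Prod.snd).flatten →
      ∃ l : List (Option S × Option S), (∀ q ∈ l, q ∈ SigmaT P A A') ∧
        flat1 l = ps.map Prod.fst ∧ flat2 l = ps'.map Prod.fst := by
  intro ps
  induction ps with
  | nil =>
    intro ps'
    induction ps' with
    | nil => exact fun _ _ _ => ⟨[], by simp, rfl, rfl⟩
    | cons p' rest' ih' =>
      intro h1 h2 heq
      obtain ⟨σ', u'⟩ := p'
      have hu'0 : u' = [] ∧ (rest'.map Prod.snd).flatten = [] := by
        simp only [List.map_nil, List.flatten_nil, List.map_cons, List.flatten_cons] at heq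
        exact List.append_eq_nil_iff.mp heq.symm
      obtain ⟨l, hl, hf1, hf2⟩ := ih' h1 (fun p hp => h2 p (by simp [hp])) (by simp [hu'0.2])
      refine ⟨(none, some σ') :: l, ?_, by simp [flat1_cons, hf1],
        by simp [flat2_cons, hf2]⟩
      intro q hq
      rcases List.mem_cons.mp hq with rfl | hq
      · refine ⟨by simp, [], by simp [hP.1, hA.2.1], ?_⟩
        have := h2 (σ', u') (by simp)
        simpa [hu'0.1] using this
      · exact hl q hq
  | cons p rest ih =>
    obtain ⟨σ, u⟩ := p
    intro ps'
    induction ps' with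
    | nil =>
      intro h1 h2 heq
      have hu : u ∈ A (P [σ]) := h1 (σ, u) (by simp)
      have hlen := piece_len hP hA σ hu
      rcases u with _ | ⟨d, _ | _⟩
      · obtain ⟨l, hl, hf1, hf2⟩ := ih [] (fun p hp => h1 p (by simp [hp]))
          (by simp) (by simpa using heq)
        refine ⟨(some σ, none) :: l, ?_, by simp [flat1_cons, hf1],
          by simp [flat2_cons, hf2]⟩
        intro q hq
        rcases List.mem_cons.mp hq with rfl | hq
        · exact ⟨by simp, [], hu, by simp [hP.1, hA'.2.1]⟩
        · exact hl q hq
      · simp at heq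
      · simp at hlen
    | cons p' rest' ih' =>
      intro h1 h2 heq
      obtain ⟨σ', u'⟩ := p'
      have hu : u ∈ A (P [σ]) := h1 (σ, u) (by simp)
      have hu' : u' ∈ A' (P [σ']) := h2 (σ', u') (by simp)
      have hlen := piece_len hP hA σ hu
      have hlen' := piece_len hP hA' σ' hu'
      rcases u with _ | ⟨d, _ | _⟩
      · -- u = []
        obtain ⟨l, hl, hf1, hf2⟩ := ih ((σ', u') :: rest')
          (fun p hp => h1 p (by simp [hp])) h2 (by simpa using heq)
        refine ⟨(some σ, none) :: l, ?_, by simp [flat1_cons, hf1],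
          by simp [flat2_cons, hf2]⟩
        intro q hq
        rcases List.mem_cons.mp hq with rfl | hq
        · exact ⟨by simp, [], hu, by simp [hP.1, hA'.2.1]⟩
        · exact hl q hq
      · rcases u' with _ | ⟨d', _ | _⟩
        · -- u' = []
          obtain ⟨l, hl, hf1, hf2⟩ := ih' h1 (fun p hp => h2 p (by simp [hp]))
            (by simpa using heq)
          refine ⟨(none, some σ') :: l, ?_, by simp [flat1_cons, hf1],
            by simp [flat2_cons, hf2]⟩
          intro q hq
          rcases List.mem_cons.mp hq with rfl | hq
          · exact ⟨by simp, [], by simp [hP.1, hA.2.1], hu'⟩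
          · exact hl q hq
        · -- u = [d], u' = [d']
          simp only [List.map_cons, List.flatten_cons, List.singleton_append,
            List.cons.injEq] at heq
          obtain ⟨rfl, heq⟩ := heq
          obtain ⟨l, hl, hf1, hf2⟩ := ih rest' (fun p hp => h1 p (by simp [hp]))
            (fun p hp => h2 p (by simp [hp])) heq
          refine ⟨(some σ, some σ') :: l, ?_, by simp [flat1_cons, hf1],
            by simp [flat2_cons, hf2]⟩
          intro q hq
          rcases List.mem_cons.mp hq with rfl | hq
          · exact ⟨by simp, [d], hu, hu'⟩
          · exact hl q hq
        · simp at hlen'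
      · simp at hlen

/-- `(w,w′)` is a product of events of `Σ_{T,A,A′}` (or `(ε,ε)`)
iff `AP(w) ∩ A′P(w′) ≠ ∅`. -/
theorem stmt16 (P : List S → List D) (hP : IsObsMap P)
    (φ φ' : D → Set (List D)) (A A' : List D → Set (List D))
    (hA : IsRRAttack φ A) (hA' : IsRRAttack φ' A') :
    ∀ w w' : List S,
      (∃ l : List (Option S × Option S),
        (∀ p ∈ l, p ∈ SigmaT P A A') ∧ w = flat1 l ∧ w' = flat2 l)
      ↔ (A (P w) ∩ A' (P w')).Nonempty := by
  intro w w'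
  constructor
  · rintro ⟨l, hl, rfl, rfl⟩
    exact forward_dir hP hA hA' l hl
  · rintro ⟨v, hv, hv'⟩
    obtain ⟨ps, hps1, hps2, hps3⟩ := decomp hP hA w v hv
    obtain ⟨ps', h1', h2', h3'⟩ := decomp hP hA' w' v hv'
    obtain ⟨l, hl, hf1, hf2⟩ := merge hP hA hA' ps ps' hps2 h2' (by rw [← hps3, ← h3'])
    exact ⟨l, hl, by rw [hf1, hps1], by rw [hf2, h1']⟩
end
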